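/- Let τ > 1 be a Salem number of degree d and, for n ∈ ℕ, let a_{k,n} denote the coefficient of x^k in the minimal polynomial P_n(x) of τⁿ over ℚ. Then for every n ≥ 1 and every k with 1 ≤ k ≤ d − 3, one has |a_{d-k-1,n}| ≤ C(d−2, k)·(|a_{d-1,n}| + d − 2) + C(d−2, k−1) + C(d−2, k+1), where C(m, j) denotes the binomial coefficient. -/

import Mathlib

/-- A Salem number: a real algebraic integer `τ > 1` of degree at least 4 over `ℚ`,
conjugate to `τ⁻¹`, all of whose complex conjugates other than `τ` and `τ⁻¹` are
of absolute value 1. -/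
def IsSalem (τ : ℝ) : Prop :=
  1 < τ ∧ IsIntegral ℤ τ ∧ 4 ≤ (minpoly ℚ τ).natDegree ∧
    (Polynomial.aeval τ⁻¹) (minpoly ℚ τ) = 0 ∧
    ∀ z ∈ ((minpoly ℚ τ).map (algebraMap ℚ ℂ)).roots,
      z ≠ (τ : ℂ) → z ≠ ((τ : ℂ))⁻¹ → ‖z‖ = 1

/-!
The conjugates of `τ ^ n` are the `n`-th powers of the conjugates of `τ`, and these powers are
pairwise distinct because `τ ^ n` is the only one of them of modulus `τ ^ n`. So the roots of
`P_n` are `τ ^ n`, `τ ^ (-n)` and `d - 2` numbers `s` on the unit circle. Since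
`τ ^ n * τ ^ (-n) = 1`, Vieta gives
`± a_{d-k-1,n} = e_{k+1}(s) + (τ ^ n + τ ^ (-n)) e_k(s) + e_{k-1}(s)`, where
`|e_j(s)| ≤ C(d-2, j)` and `|τ ^ n + τ ^ (-n)| = |-a_{d-1,n} - e_1(s)| ≤ |a_{d-1,n}| + d - 2`.
-/

open Polynomial IntermediateField

section Conjugates

variable {F L : Type*} [Field F] [Field L] [Algebra F L]

theorem IntermediateField.isConjRoot_algHom_apply {E : IntermediateField F L} (φ : E →ₐ[F] L)
    (u : E) : IsConjRoot F (u : L) (φ u) :=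
  (minpoly_eq u).symm.trans (minpoly.algHom_eq φ φ.injective u).symm

theorem IsConjRoot.pow {x y : L} (hx : IsIntegral F x) (h : IsConjRoot F x y) (n : ℕ) :
    IsConjRoot F (x ^ n) (y ^ n) := by
  set φ : F⟮x⟯ →ₐ[F] L := (algHomAdjoinIntegralEquiv F hx).symm
    ⟨y, (isConjRoot_iff_mem_minpoly_aroots hx).1 h⟩
  have hφ : φ (AdjoinSimple.gen F x) = y := algHomAdjoinIntegralEquiv_symm_apply_gen F hx _
  simpa [hφ] using isConjRoot_algHom_apply φ (AdjoinSimple.gen F x ^ n)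

variable [IsAlgClosed L]

theorem IntermediateField.exists_algHom_adjoin_apply_eq {S : Set L}
    (hS : ∀ s ∈ S, IsIntegral F s) {u y : L} (hu : u ∈ adjoin F S) (h : IsConjRoot F u y) :
    ∃ φ : adjoin F S →ₐ[F] L, φ ⟨u, hu⟩ = y :=
  exists_algHom_adjoin_of_splits_of_aeval (fun s hs ↦ ⟨hS s hs, IsAlgClosed.splits _⟩) hu
    h.aeval_eq_zero

theorem exists_isConjRoot_pow_eq {x r : L} (hx : IsIntegral F x) {n : ℕ}
    (h : IsConjRoot F (x ^ n) r) : ∃ y, IsConjRoot F x y ∧ y ^ n = r := by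
  have hxx : x ∈ F⟮x⟯ := mem_adjoin_simple_self F x
  obtain ⟨φ, hφ⟩ := exists_algHom_adjoin_apply_eq (by simpa using hx) (pow_mem hxx n) h
  exact ⟨φ ⟨x, hxx⟩, isConjRoot_algHom_apply φ ⟨x, hxx⟩, by rw [← map_pow]; exact hφ⟩

/-- An embedding of `F⟮z, w⟯` sending `z` to `x` reduces `z ^ n = w ^ n` to the case `z = x`. -/
theorem pow_injOn_setOf_isConjRoot {x : L} (hx : IsIntegral F x) {n : ℕ}
    (huniq : ∀ y, IsConjRoot F x y → y ^ n = x ^ n → y = x) :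
    Set.InjOn (· ^ n) {y | IsConjRoot F x y} := by
  intro z hz w hw hzw
  have hS : ∀ s ∈ ({z, w} : Set L), IsIntegral F s := by
    rintro s (rfl | rfl)
    exacts [hz.isIntegral hx, hw.isIntegral hx]
  have hz' : z ∈ adjoin F {z, w} := subset_adjoin F _ (by simp)
  have hw' : w ∈ adjoin F {z, w} := subset_adjoin F _ (by simp)
  obtain ⟨φ, hφ⟩ := exists_algHom_adjoin_apply_eq hS hz' (IsConjRoot.symm hz)
  have hφw : φ ⟨w, hw'⟩ = x := by
    refine huniq _ (hw.trans (isConjRoot_algHom_apply φ ⟨w, hw'⟩)) ?_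
    rw [← hφ, ← map_pow, ← map_pow]
    congr 1
    exact Subtype.ext hzw.symm
  exact congrArg Subtype.val (φ.injective (hφw.trans hφ.symm)).symm

theorem aroots_minpoly_pow [PerfectField F] {x : L} (hx : IsIntegral F x) {n : ℕ}
    (huniq : ∀ y, IsConjRoot F x y → y ^ n = x ^ n → y = x) :
    (minpoly F (x ^ n)).aroots L = ((minpoly F x).aroots L).map (· ^ n) := by
  have hnodup : ∀ {z : L}, IsIntegral F z → ((minpoly F z).aroots L).Nodup := fun hz ↦
    nodup_roots (PerfectField.separable_of_irreducible (minpoly.irreducible hz)).map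
  refine (hnodup (hx.pow n)).ext ((hnodup hx).map_on fun z hz w hw ↦ ?_) |>.2 fun r ↦ ?_
  · exact pow_injOn_setOf_isConjRoot hx huniq ((isConjRoot_iff_mem_minpoly_aroots hx).2 hz)
      ((isConjRoot_iff_mem_minpoly_aroots hx).2 hw)
  · simp only [Multiset.mem_map, ← isConjRoot_iff_mem_minpoly_aroots hx,
      ← isConjRoot_iff_mem_minpoly_aroots (hx.pow n)]
    exact ⟨exists_isConjRoot_pow_eq hx, fun ⟨y, hy, hyr⟩ ↦ hyr ▸ hy.pow hx n⟩

end Conjugates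

namespace Multiset

theorem esymm_cons_succ {R : Type*} [CommSemiring R] (a : R) (s : Multiset R) (m : ℕ) :
    (a ::ₘ s).esymm (m + 1) = s.esymm (m + 1) + a * s.esymm m := by
  simp only [esymm, powersetCard_cons, map_add, sum_add, map_map, Function.comp_def, prod_cons,
    sum_map_mul_left]

theorem esymm_cons_cons_succ_succ {R : Type*} [CommRing R] {a b : R} (hab : a * b = 1)
    (s : Multiset R) (m : ℕ) :
    (a ::ₘ b ::ₘ s).esymm (m + 2) = s.esymm (m + 2) + (a + b) * s.esymm (m + 1) + s.esymm m := by
  rw [esymm_cons_succ, esymm_cons_succ, esymm_cons_succ]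
  linear_combination s.esymm m * hab

theorem esymm_cons_cons_one {R : Type*} [CommSemiring R] (a b : R) (s : Multiset R) :
    (a ::ₘ b ::ₘ s).esymm 1 = a + b + s.esymm 1 := by
  simp only [esymm, powersetCard_one, map_map, Function.comp_def, prod_singleton, map_id', sum_cons]
  ring

variable {R : Type*} [SeminormedCommRing R] [NormOneClass R]

theorem norm_esymm_le_choose {s : Multiset R} (hs : ∀ z ∈ s, ‖z‖ ≤ 1) (m : ℕ) :
    ‖s.esymm m‖ ≤ (card s).choose m := by
  have hprod : ∀ t ∈ s.powersetCard m, ‖t.prod‖ ≤ 1 := fun t ht ↦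
    prod_induction (‖·‖ ≤ 1) t
      (fun a b ha hb ↦ (norm_mul_le a b).trans (mul_le_one₀ ha (norm_nonneg b) hb))
      norm_one.le fun z hz ↦ hs z (mem_of_le (mem_powersetCard.1 ht).1 hz)
  calc ‖s.esymm m‖ ≤ ((s.powersetCard m).map fun t ↦ ‖t.prod‖).sum := by
        simpa [esymm, map_map] using norm_multiset_sum_le ((s.powersetCard m).map prod)
    _ ≤ card ((s.powersetCard m).map fun t ↦ ‖t.prod‖) • (1 : ℝ) :=
        sum_le_card_nsmul _ _ fun x hx ↦ by
          obtain ⟨t, ht, rfl⟩ := mem_map.1 hx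
          exact hprod t ht
    _ = (card s).choose m := by simp

theorem norm_esymm_cons_cons_le {a b : R} (hab : a * b = 1) {s : Multiset R}
    (hs : ∀ z ∈ s, ‖z‖ ≤ 1) (m : ℕ) :
    ‖(a ::ₘ b ::ₘ s).esymm (m + 2)‖ ≤
      (card s).choose (m + 1) * (‖(a ::ₘ b ::ₘ s).esymm 1‖ + card s) + (card s).choose m +
        (card s).choose (m + 2) := by
  have hsum : ‖a + b‖ ≤ ‖(a ::ₘ b ::ₘ s).esymm 1‖ + card s := by
    have h1 := norm_esymm_le_choose hs 1
    rw [Nat.choose_one_right] at h1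
    calc ‖a + b‖ = ‖(a ::ₘ b ::ₘ s).esymm 1 - s.esymm 1‖ := by
          rw [esymm_cons_cons_one, add_sub_cancel_right]
      _ ≤ _ := (norm_sub_le _ _).trans (by gcongr)
  rw [esymm_cons_cons_succ_succ hab]
  calc _ ≤ ‖s.esymm (m + 2)‖ + ‖a + b‖ * ‖s.esymm (m + 1)‖ + ‖s.esymm m‖ :=
        (norm_add₃_le ..).trans (by gcongr; exact norm_mul_le _ _)
    _ ≤ _ := by
        have := norm_esymm_le_choose hs
        have := mul_le_mul hsum (this (m + 1)) (norm_nonneg _) (by positivity)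
        linarith [norm_esymm_le_choose hs (m + 2), norm_esymm_le_choose hs m]

end Multiset

theorem Polynomial.Monic.norm_algebraMap_coeff {F L : Type*} [Field F] [NormedField L]
    [Algebra F L] [IsAlgClosed L] {p : F[X]} (hp : p.Monic) {j : ℕ} (hj : j ≤ p.natDegree) :
    ‖algebraMap F L (p.coeff j)‖ = ‖(p.aroots L).esymm (p.natDegree - j)‖ := by
  have hvieta := coeff_eq_esymm_roots_of_splits (IsAlgClosed.splits (p.map (algebraMap F L)))
    (k := j) (by rwa [Polynomial.natDegree_map])
  rw [coeff_map, Polynomial.natDegree_map, (hp.map (algebraMap F L)).leadingCoeff] at hvieta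
  rw [hvieta, aroots_def]
  simp

theorem minpoly_ofReal (x : ℝ) : minpoly ℚ (x : ℂ) = minpoly ℚ x :=
  minpoly.algebraMap_eq (algebraMap ℝ ℂ).injective x

namespace IsSalem

variable {τ : ℝ}

theorem one_lt (hτ : IsSalem τ) : 1 < τ := hτ.1

theorem isIntegral (hτ : IsSalem τ) : IsIntegral ℚ τ := hτ.2.1.tower_top

theorem exists_aroots_minpoly_eq (hτ : IsSalem τ) : ∃ S : Multiset ℂ,
    (minpoly ℚ τ).aroots ℂ = (τ : ℂ) ::ₘ (τ : ℂ)⁻¹ ::ₘ S ∧ ∀ z ∈ S, ‖z‖ = 1 := by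
  have hτQ := hτ.isIntegral
  obtain ⟨hτ1, -, -, hτinv, hunit⟩ := hτ
  set R := (minpoly ℚ τ).aroots ℂ
  have hroot : ∀ x : ℝ, aeval x (minpoly ℚ τ) = 0 → (x : ℂ) ∈ R := fun x hx ↦
    mem_aroots.2 ⟨minpoly.ne_zero hτQ, by
      rw [← Complex.coe_algebraMap, aeval_algebraMap_apply, hx, map_zero]⟩
  have hnodup : R.Nodup := nodup_roots (minpoly.irreducible hτQ).separable.map
  have hne : (τ : ℂ)⁻¹ ≠ τ := by
    exact_mod_cast ((inv_lt_one_of_one_lt₀ hτ1).trans hτ1).ne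
  have hinv : (τ : ℂ)⁻¹ ∈ R.erase τ :=
    (Multiset.mem_erase_of_ne hne).2 (by exact_mod_cast hroot _ hτinv)
  refine ⟨(R.erase τ).erase (τ : ℂ)⁻¹, ?_, fun z hz ↦ ?_⟩
  · rw [Multiset.cons_erase hinv, Multiset.cons_erase (hroot τ (minpoly.aeval ℚ τ))]
  obtain ⟨hzinv, hz⟩ := (hnodup.erase _).mem_erase_iff.1 hz
  obtain ⟨hzτ, hz⟩ := hnodup.mem_erase_iff.1 hz
  exact hunit z hz hzτ hzinv

/-- `τ ^ n` is the only `n`-th power of a conjugate of `τ` of modulus `τ ^ n`, so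
`aroots_minpoly_pow` applies. -/
theorem exists_aroots_minpoly_pow_eq (hτ : IsSalem τ) {n : ℕ} (hn : n ≠ 0) :
    ∃ S : Multiset ℂ, (minpoly ℚ (τ ^ n)).aroots ℂ = (τ : ℂ) ^ n ::ₘ ((τ : ℂ) ^ n)⁻¹ ::ₘ S ∧
      (∀ z ∈ S, ‖z‖ = 1) ∧ Multiset.card S + 2 = (minpoly ℚ τ).natDegree := by
  obtain ⟨S, hR, hS⟩ := hτ.exists_aroots_minpoly_eq
  have hτ0 : 0 < τ := zero_lt_one.trans hτ.one_lt
  have hτQ : IsIntegral ℚ (τ : ℂ) := hτ.isIntegral.algebraMap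
  have huniq : ∀ y, IsConjRoot ℚ (τ : ℂ) y → y ^ n = (τ : ℂ) ^ n → y = τ := by
    intro y hy hyn
    have hyτ : ‖y‖ = τ := by
      have := congrArg norm hyn
      rwa [norm_pow, norm_pow, Complex.norm_real, Real.norm_of_nonneg hτ0.le,
        pow_left_inj₀ (norm_nonneg _) hτ0.le hn] at this
    rw [isConjRoot_iff_mem_minpoly_aroots hτQ, minpoly_ofReal, hR] at hy
    rcases Multiset.mem_cons.1 hy with rfl | hy
    · rfl
    rcases Multiset.mem_cons.1 hy with rfl | hy
    · rw [norm_inv, Complex.norm_real, Real.norm_of_nonneg hτ0.le] at hyτ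
      exact absurd hyτ ((inv_lt_one_of_one_lt₀ hτ.one_lt).trans hτ.one_lt).ne
    · exact absurd ((hS y hy).symm.trans hyτ) hτ.one_lt.ne
  refine ⟨S.map (· ^ n), ?_, ?_, ?_⟩
  · rw [← minpoly_ofReal, Complex.ofReal_pow, aroots_minpoly_pow hτQ huniq, minpoly_ofReal, hR]
    simp [inv_pow]
  · simp only [Multiset.mem_map]
    rintro _ ⟨z, hz, rfl⟩
    rw [norm_pow, hS z hz, one_pow]
  · have := congrArg Multiset.card hR
    rw [IsAlgClosed.card_aroots_eq_natDegree] at this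
    simp [this]

end IsSalem

/-- Theorem 3(c): if `τ` is a Salem number of degree `d` and `a_{k,n}` is the coefficient
of `x^k` in the minimal polynomial of `τ ^ n`, then for all `n ≥ 1` and `1 ≤ k ≤ d - 3`,
`|a_{d-k-1,n}| ≤ C(d-2,k) (|a_{d-1,n}| + d - 2) + C(d-2,k-1) + C(d-2,k+1)`. -/
theorem salem_inner_coeff_bound
    (τ : ℝ) (hτ : IsSalem τ) (d : ℕ) (hd : d = (minpoly ℚ τ).natDegree)
    (n : ℕ) (hn : 1 ≤ n) (k : ℕ) (hk1 : 1 ≤ k) (hk2 : k ≤ d - 3) :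
    |((minpoly ℚ (τ ^ n)).coeff (d - k - 1) : ℝ)| ≤
      ((d - 2).choose k : ℝ) * (|((minpoly ℚ (τ ^ n)).coeff (d - 1) : ℝ)| + (d : ℝ) - 2) +
        ((d - 2).choose (k - 1) : ℝ) + ((d - 2).choose (k + 1) : ℝ) := by
  obtain ⟨S, hQ, hS, hcard⟩ := hτ.exists_aroots_minpoly_pow_eq (n := n) (by omega)
  have hmonic : (minpoly ℚ (τ ^ n)).Monic := minpoly.monic (hτ.isIntegral.pow n)
  have hdeg : (minpoly ℚ (τ ^ n)).natDegree = d := by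
    rw [← IsAlgClosed.card_aroots_eq_natDegree (B := ℂ), hQ]
    simp only [Multiset.card_cons]
    omega
  obtain ⟨m, rfl⟩ : ∃ m, k = m + 1 := ⟨k - 1, by omega⟩
  simp only [← Complex.norm_ratCast, ← eq_ratCast (algebraMap ℚ ℂ)]
  rw [hmonic.norm_algebraMap_coeff (by omega), hmonic.norm_algebraMap_coeff (by omega), hdeg, hQ,
    show d - (d - (m + 1) - 1) = m + 2 by omega, show d - (d - 1) = 1 by omega,
    show d - 2 = Multiset.card S by omega, Nat.add_sub_cancel]
  have hτn : (τ : ℂ) ^ n ≠ 0 := pow_ne_zero _ (by exact_mod_cast (zero_lt_one.trans hτ.one_lt).ne')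
  have key := Multiset.norm_esymm_cons_cons_le (mul_inv_cancel₀ hτn) (fun z hz ↦ (hS z hz).le) m
  have hcast : (Multiset.card S : ℝ) = d - 2 := by
    rw [eq_sub_iff_add_eq]; exact_mod_cast hcard.trans hd.symm
  rw [hcast] at key
  linarith
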